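/- For every integer M ≥ 1 and every integer j with 1 ≤ j ≤ M, the well-conditioned multiproduct parameter k_j := ⌈(2√2·M/π)·(sin(π(2j−1)/(8M)))^{−1}⌉ satisfies M < k_j and k_j ≤ 3·M². -/

import Mathlib

/-- The well-conditioned multiproduct parameters (`j` is 1-based). -/
noncomputable def wellCondK (M j : ℕ) : ℕ :=
  ⌈(2 * Real.sqrt 2 * M / Real.pi) / Real.sin (Real.pi * (2 * (j : ℝ) - 1) / (8 * M))⌉₊

/-! The angle `θ_j = π (2j - 1) / (8M)` lies in `[π / (8M), π / 4]`. On that range `sin θ_j` is at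
most `sin (π / 4) = √2 / 2`, which gives `k_j ≥ 4M / π > M`; and by concavity of `sin` on `[0, π]`
the chord through `0` and `π / 4` gives `sin θ_j ≥ (2√2 / π) θ_j ≥ √2 / (4M)`, hence
`k_j ≤ ⌈8M² / π⌉ ≤ 3M²` because `π > 8 / 3`. -/

open Real

namespace Real

theorem mul_sin_le_mul_sin {a x : ℝ} (hx : 0 ≤ x) (hxa : x ≤ a) (ha : a ≤ π) :
    x * sin a ≤ a * sin x := by
  rcases hx.eq_or_lt with rfl | hx
  · simp
  have ha0 : 0 < a := hx.trans_le hxa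
  have hchord := strictConcaveOn_sin_Icc.concaveOn.2 ⟨le_rfl, pi_pos.le⟩ ⟨ha0.le, ha⟩
    (sub_nonneg.2 ((div_le_one ha0).2 hxa)) (div_nonneg hx.le ha0.le) (sub_add_cancel 1 (x / a))
  simp only [smul_eq_mul, sin_zero, mul_zero, zero_add, div_mul_cancel₀ x ha0.ne'] at hchord
  rwa [div_mul_eq_mul_div, div_le_iff₀ ha0, mul_comm (sin x)] at hchord

end Real

noncomputable def wellCondAngle (M j : ℕ) : ℝ := π * (2 * (j : ℝ) - 1) / (8 * M)

section

variable {M j : ℕ}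

theorem wellCondK_eq :
    wellCondK M j = ⌈(2 * √2 * M / π) / sin (wellCondAngle M j)⌉₊ := rfl

theorem pi_div_eight_mul_le_wellCondAngle (hj1 : 1 ≤ j) : π / (8 * M) ≤ wellCondAngle M j := by
  have hj : (1 : ℝ) ≤ j := by exact_mod_cast hj1
  refine div_le_div_of_nonneg_right ?_ (by positivity)
  nlinarith [pi_pos]

theorem wellCondAngle_le_pi_div_four (hM : 1 ≤ M) (hjM : j ≤ M) : wellCondAngle M j ≤ π / 4 := by
  have hM' : (1 : ℝ) ≤ M := by exact_mod_cast hM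
  have hjM' : (j : ℝ) ≤ M := by exact_mod_cast hjM
  rw [wellCondAngle, div_le_div_iff₀ (by positivity) (by norm_num)]
  nlinarith [pi_pos]

theorem sin_wellCondAngle_le (hM : 1 ≤ M) (hj1 : 1 ≤ j) (hjM : j ≤ M) :
    sin (wellCondAngle M j) ≤ √2 / 2 := by
  rw [← sin_pi_div_four]
  have hθ := pi_div_eight_mul_le_wellCondAngle (M := M) hj1
  refine sin_le_sin_of_le_of_le_pi_div_two ?_ (by linarith [pi_pos])
    (wellCondAngle_le_pi_div_four hM hjM)
  linarith [show 0 ≤ π / (8 * M) by positivity, pi_pos]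

theorem le_sin_wellCondAngle (hM : 1 ≤ M) (hj1 : 1 ≤ j) (hjM : j ≤ M) :
    √2 / (4 * M) ≤ sin (wellCondAngle M j) := by
  have hM' : (0 : ℝ) < M := by exact_mod_cast hM
  have hθ := pi_div_eight_mul_le_wellCondAngle (M := M) hj1
  have hchord := mul_sin_le_mul_sin (le_trans (by positivity) hθ)
    (wellCondAngle_le_pi_div_four hM hjM) (by linarith [pi_pos])
  rw [sin_pi_div_four] at hchord
  calc √2 / (4 * M) = 4 / π * (√2 / 2 * (π / (8 * M))) := by field_simp; ring
    _ ≤ 4 / π * (√2 / 2 * wellCondAngle M j) := by gcongr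
    _ ≤ sin (wellCondAngle M j) := by
      rw [div_mul_eq_mul_div, div_le_iff₀ pi_pos]
      linarith

theorem lt_wellCondK (hM : 1 ≤ M) (hj1 : 1 ≤ j) (hjM : j ≤ M) : M < wellCondK M j := by
  have hM' : (0 : ℝ) < M := by exact_mod_cast hM
  have hsin := sin_wellCondAngle_le hM hj1 hjM
  have hsin_pos : 0 < sin (wellCondAngle M j) :=
    lt_of_lt_of_le (by positivity) (le_sin_wellCondAngle hM hj1 hjM)
  rw [wellCondK_eq, Nat.lt_ceil]
  calc (M : ℝ) < 4 * M / π := by rw [lt_div_iff₀ pi_pos]; nlinarith [pi_lt_four]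
    _ = (2 * √2 * M / π) / (√2 / 2) := by field_simp; norm_num
    _ ≤ (2 * √2 * M / π) / sin (wellCondAngle M j) := by gcongr

theorem wellCondK_le (hM : 1 ≤ M) (hj1 : 1 ≤ j) (hjM : j ≤ M) : wellCondK M j ≤ 3 * M ^ 2 := by
  have hM' : (0 : ℝ) < M := by exact_mod_cast hM
  have hsin := le_sin_wellCondAngle hM hj1 hjM
  rw [wellCondK_eq, Nat.ceil_le]
  push_cast
  calc (2 * √2 * M / π) / sin (wellCondAngle M j) ≤ (2 * √2 * M / π) / (√2 / (4 * M)) := by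
        gcongr
    _ = 8 * M ^ 2 / π := by field_simp; ring
    _ ≤ 3 * M ^ 2 := by rw [div_le_iff₀ pi_pos]; nlinarith [pi_gt_three]

end

theorem stmt19 (M j : ℕ) (hM : 1 ≤ M) (hj1 : 1 ≤ j) (hjM : j ≤ M) :
    M < wellCondK M j ∧ wellCondK M j ≤ 3 * M ^ 2 :=
  ⟨lt_wellCondK hM hj1 hjM, wellCondK_le hM hj1 hjM⟩
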